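/- arXiv:1109.2018 — 4 statements merged into one kernel-verified Lean document; each statement's English description precedes it below -/
import Mathlib

section
/- Let A : V → W and B : W → V be linear maps of finite-dimensional complex vector spaces. Define B' = Σ_{n≥1} ((2πi)^n / n!) · B(AB)^{n-1} (a finite sum since it can be evaluated via the holomorphic functional calculus / polynomial in AB). Then 1 + A B' = exp(2πi · AB) and 1 + B' A = exp(2πi · BA). -/
open scoped Real Nat
open Complex

/-! With `f(z) = (e^{cz} - 1)/z = ∑ c^{k+1} z^k / (k+1)!` (`expSubOneDiv`), the identity
`B (AB)^k = (BA)^k B` gives `B' = B f(AB) = f(BA) B`, and `1 + z f(z) = 1 + f(z) z = e^{cz}` holds in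
any Banach algebra by splitting off the constant term of the exponential series. -/

section ExpSubOneDiv

variable {𝕂 R : Type*} [RCLike 𝕂] [NormedRing R] [NormedAlgebra 𝕂 R] [CompleteSpace R]

variable (𝕂) in
noncomputable def expSubOneDiv (c : 𝕂) (x : R) : R :=
  ∑' k : ℕ, (c ^ (k + 1) / (k + 1)! : 𝕂) • x ^ k

theorem summable_expSubOneDiv (c : 𝕂) (x : R) :
    Summable fun k : ℕ => (c ^ (k + 1) / (k + 1)! : 𝕂) • x ^ k := by
  refine Summable.of_norm_bounded_eventually_nat
    ((Real.summable_pow_div_factorial (‖c‖ * ‖x‖)).mul_left ‖c‖) ?_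
  -- `‖x ^ 0‖ = ‖1‖` may exceed `1`, so the bound is only claimed for `k > 0`.
  filter_upwards [Filter.eventually_gt_atTop 0] with k hk
  have hfac : (k ! : ℝ) ≤ (k + 1)! := by exact_mod_cast Nat.factorial_le k.le_succ
  calc ‖(c ^ (k + 1) / (k + 1)! : 𝕂) • x ^ k‖
      = ‖c‖ ^ (k + 1) / (k + 1)! * ‖x ^ k‖ := by
        rw [norm_smul, norm_div, norm_pow, RCLike.norm_natCast]
    _ ≤ ‖c‖ ^ (k + 1) / k ! * ‖x‖ ^ k := by
        gcongr
        exact norm_pow_le' x hk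
    _ = ‖c‖ * ((‖c‖ * ‖x‖) ^ k / k !) := by ring

theorem exp_smul_eq_one_add_tsum (c : 𝕂) (x : R) :
    NormedSpace.exp (c • x) = 1 + ∑' k : ℕ, (c ^ (k + 1) / (k + 1)! : 𝕂) • x ^ (k + 1) := by
  rw [NormedSpace.exp_eq_tsum 𝕂]
  beta_reduce
  rw [(NormedSpace.expSeries_summable' (𝕂 := 𝕂) (c • x)).tsum_eq_zero_add]
  simp only [smul_pow, smul_smul, pow_zero, Nat.factorial_zero, Nat.cast_one, inv_one, one_smul,
    div_eq_inv_mul]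

theorem exp_smul_eq_one_add_mul_expSubOneDiv (c : 𝕂) (x : R) :
    NormedSpace.exp (c • x) = 1 + x * expSubOneDiv 𝕂 c x := by
  rw [exp_smul_eq_one_add_tsum, expSubOneDiv, ← (summable_expSubOneDiv c x).tsum_mul_left]
  simp only [mul_smul_comm, pow_succ']

theorem exp_smul_eq_one_add_expSubOneDiv_mul (c : 𝕂) (x : R) :
    NormedSpace.exp (c • x) = 1 + expSubOneDiv 𝕂 c x * x := by
  rw [exp_smul_eq_one_add_tsum, expSubOneDiv, ← (summable_expSubOneDiv c x).tsum_mul_right]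
  simp only [smul_mul_assoc, pow_succ]

end ExpSubOneDiv

namespace Matrix

theorem mul_pow_mul {m n R : Type*} [Fintype m] [Fintype n] [DecidableEq m] [DecidableEq n]
    [Semiring R] (A : Matrix m n R) (B : Matrix n m R) (k : ℕ) :
    (B * A) ^ k * B = B * (A * B) ^ k := by
  induction k with
  | zero => simp
  | succ k ih =>
    rw [pow_succ, pow_succ, Matrix.mul_assoc, Matrix.mul_assoc B A B, ← Matrix.mul_assoc, ih,
      Matrix.mul_assoc]

variable {ι l m n R : Type*} [Fintype m] [Semiring R] [TopologicalSpace R]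
  [IsTopologicalSemiring R] [T2Space R]

theorem mul_tsum (B : Matrix l m R) {f : ι → Matrix m n R} (hf : Summable f) :
    B * ∑' i, f i = ∑' i, B * f i :=
  hf.map_tsum (addMonoidHomMulLeft B) (continuous_const.matrix_mul continuous_id)

theorem tsum_mul (B : Matrix m n R) {f : ι → Matrix l m R} (hf : Summable f) :
    (∑' i, f i) * B = ∑' i, f i * B :=
  hf.map_tsum (addMonoidHomMulRight B) (continuous_id.matrix_mul continuous_const)

end Matrix

attribute [local instance] Matrix.linftyOpNormedRing Matrix.linftyOpNormedAlgebra

/-- For complex matrices `A : n × m`, `B : m × n` (linear maps `V → W`, `W → V`),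
with `B' = ∑_{k≥1} ((2πi)^k / k!) • B (A B)^{k-1}`, one has
`1 + A B' = exp(2πi • A B)` and `1 + B' A = exp(2πi • B A)`. -/
theorem stmt_1 (n m : ℕ) (A : Matrix (Fin m) (Fin n) ℂ) (B : Matrix (Fin n) (Fin m) ℂ)
    (B' : Matrix (Fin n) (Fin m) ℂ)
    (hB' : B' = ∑' k : ℕ, (((2 * π * I) ^ (k + 1) / ((k + 1)! : ℂ)) • (B * (A * B) ^ k))) :
    1 + A * B' = NormedSpace.exp ((2 * π * I) • (A * B)) ∧
      1 + B' * A = NormedSpace.exp ((2 * π * I) • (B * A)) := by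
  set c : ℂ := 2 * π * I
  -- `exact` rather than `rw`: the goal's sums use the product topology, the lemmas the topology of
  -- the `L∞` operator norm, which agree only up to unfolding.
  have hB'_left : B' = B * expSubOneDiv ℂ c (A * B) := by
    simp only [hB', ← Matrix.mul_smul]
    exact (Matrix.mul_tsum B (summable_expSubOneDiv c (A * B))).symm
  have hB'_right : B' = expSubOneDiv ℂ c (B * A) * B := by
    simp only [hB', ← Matrix.mul_pow_mul, ← Matrix.smul_mul]
    exact (Matrix.tsum_mul B (summable_expSubOneDiv c (B * A))).symm
  constructor
  · rw [hB'_left, ← Matrix.mul_assoc]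
    exact (exp_smul_eq_one_add_mul_expSubOneDiv c (A * B)).symm
  · rw [hB'_right, Matrix.mul_assoc]
    exact (exp_smul_eq_one_add_expSubOneDiv_mul c (B * A)).symm
end

section
/- Let T ⊆ ℂ be non-resonant and set H = { e^{2πi t} : t ∈ T }. Then the map R ↦ exp(2πi·R) induces a bijection between similarity classes of n×n complex matrices with all eigenvalues in T and similarity classes of matrices in GL_n(ℂ) with all eigenvalues in H. -/
/-
For a finite `S ⊆ T` and `N ≥ n + 2`, the Chinese remainder theorem in `ℂ[X]` gives a polynomial
`g` agreeing with `z ↦ e^{2πiz}` to order `N` at every `t ∈ S` (Hermite interpolation). Since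
`(R - t)^n` kills the generalized `t`-eigenspace of `R`, `exp(2πiR) = g(R)` whenever
`spec R ⊆ S`. As `g'(t) = 2πi e^{2πit} ≠ 0` and, by non-resonance, `t ↦ e^{2πit}` is injective
on `S`, `g` can be inverted to order `N`: some `f` has `f ∘ g ≡ X` modulo `(X - t)^N` and
`g ∘ f ≡ X` modulo `(X - e^{2πit})^N`. So `f(exp(2πiR)) = R` and `exp(2πi f(G)) = G`; since
polynomial maps preserve similarity, `R ↦ exp(2πiR)` is injective and surjective on similarity
classes.
-/

open scoped Real
open Complex

def NonResonant (T : Set ℂ) : Prop :=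
  ∀ s ∈ T, ∀ t ∈ T, (∃ k : ℤ, s - t = (k : ℂ)) → s = t

def MatSimilar {n : ℕ} (M N : Matrix (Fin n) (Fin n) ℂ) : Prop :=
  ∃ P : Matrix (Fin n) (Fin n) ℂ, IsUnit P ∧ N = P * M * P⁻¹

open Polynomial
open scoped Nat

namespace Polynomial

section Field

variable {K : Type*} [Field K]

theorem exists_forall_pow_dvd_sub {ι : Type*} {s : Finset ι} {a : ι → K} (ha : Set.InjOn a s)
    (N : ℕ) (c : ι → K[X]) : ∃ g : K[X], ∀ i ∈ s, (X - C (a i)) ^ N ∣ g - c i := by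
  have hprime : ∀ i ∈ s, Prime (Ideal.span {X - C (a i)}) := fun i _ =>
    Ideal.prime_span_singleton_iff.mpr (prime_X_sub_C _)
  have hne : ∀ i ∈ s, ∀ j ∈ s, i ≠ j →
      Ideal.span {X - C (a i)} ≠ Ideal.span {X - C (a j)} := by
    intro i hi j hj hij h
    have : X - C (a j) ∣ X - C (a i) :=
      Ideal.mem_span_singleton.mp (h ▸ Ideal.mem_span_singleton_self _)
    exact hij (ha hi hj (by simpa [dvd_iff_isRoot, sub_eq_zero, eq_comm] using this))
  obtain ⟨g, hg⟩ := IsDedekindDomain.exists_forall_sub_mem_ideal _ (fun _ => N) hprime hne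
    (fun i => c i)
  exact ⟨g, fun i hi => by
    simpa [Ideal.span_singleton_pow, Ideal.mem_span_singleton] using hg i hi⟩

theorem eval_eq_of_pow_dvd_sub {a : K} {N : ℕ} (hN : N ≠ 0) {p q : K[X]}
    (h : (X - C a) ^ N ∣ p - q) : p.eval a = q.eval a := by
  rw [← sub_eq_zero, ← eval_sub, ← IsRoot.def, ← dvd_iff_isRoot]
  exact (dvd_pow_self _ hN).trans h

theorem sub_dvd_comp_sub_comp (p a b : K[X]) : a - b ∣ p.comp a - p.comp b := by
  simpa [eval_map, comp] using sub_dvd_eval_sub a b (p.map C)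

section SimpleRoot

variable {G u : K[X]} {t μ : K} (hG : G - C μ = (X - C t) * u) (hu : u.eval t ≠ 0)
include hG hu

theorem exists_pow_dvd_comp_sub (c : K[X]) (N : ℕ) :
    ∃ q : K[X], (X - C t) ^ N ∣ q.comp G - c := by
  induction N with
  | zero => exact ⟨0, one_dvd _⟩
  | succ N ih =>
    obtain ⟨q, w, hw⟩ := ih
    -- `(X - μ)^N ∘ G = (X - t)^N u^N`, so subtracting a multiple of it corrects the next term.
    set a := w.eval t / u.eval t ^ N
    refine ⟨q - C a * (X - C μ) ^ N, ?_⟩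
    have hroot : X - C t ∣ w - C a * u ^ N := by
      rw [dvd_iff_isRoot]
      simp [a, div_mul_cancel₀ _ (pow_ne_zero N hu)]
    have : (q - C a * (X - C μ) ^ N).comp G - c = (X - C t) ^ N * (w - C a * u ^ N) := by
      simp only [sub_comp, mul_comp, C_comp, pow_comp, X_comp, hG, mul_pow]
      linear_combination hw
    rw [this, pow_succ]
    exact mul_dvd_mul_left _ hroot

theorem pow_dvd_of_pow_dvd_comp {D : K[X]} (N : ℕ) (h : (X - C t) ^ N ∣ D.comp G) :
    (X - C μ) ^ N ∣ D := by
  induction N with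
  | zero => exact one_dvd _
  | succ N ih =>
    obtain ⟨D₁, rfl⟩ := ih ((pow_dvd_pow _ N.le_succ).trans h)
    have hcomp : (X - C t) ^ N * (X - C t) ∣ (X - C t) ^ N * (u ^ N * D₁.comp G) := by
      rw [← pow_succ, ← mul_assoc, ← mul_pow, ← hG]
      simpa [mul_comp, pow_comp] using h
    have hGt : G.eval t = μ := by simpa [sub_eq_zero] using congrArg (eval t) hG
    have hD₁ : X - C μ ∣ D₁ := by
      have := (mul_dvd_mul_iff_left (pow_ne_zero N (X_sub_C_ne_zero t))).mp hcomp
      rw [dvd_iff_isRoot, IsRoot.def, eval_mul, eval_comp, hGt, eval_pow] at this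
      exact dvd_iff_isRoot.mpr ((mul_eq_zero.mp this).resolve_left (pow_ne_zero N hu))
    rw [pow_succ]
    exact mul_dvd_mul_left _ hD₁

end SimpleRoot

end Field

noncomputable def expTaylor (c t : ℂ) (N : ℕ) : ℂ[X] :=
  exp (c * t) • ∑ k ∈ Finset.range N, (c ^ k / k ! : ℂ) • (X - C t) ^ k

theorem eval_expTaylor {N : ℕ} (hN : N ≠ 0) (c t : ℂ) :
    (expTaylor c t N).eval t = exp (c * t) := by
  obtain ⟨M, rfl⟩ := Nat.exists_eq_succ_of_ne_zero hN
  simp [expTaylor, eval_finsetSum, Finset.sum_range_succ']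

theorem expTaylor_sub_C_eq_mul {N : ℕ} (hN : 2 ≤ N) (c t : ℂ) :
    ∃ v : ℂ[X], expTaylor c t N - C (exp (c * t)) = (X - C t) * v ∧
      v.eval t = c * exp (c * t) := by
  obtain ⟨M, rfl⟩ := Nat.exists_eq_add_of_le' hN
  refine ⟨exp (c * t) •
    ∑ k ∈ Finset.range (M + 1), (c ^ (k + 1) / (k + 1)! : ℂ) • (X - C t) ^ k, ?_, ?_⟩
  · simp only [expTaylor, Finset.sum_range_succ', pow_succ', ← mul_smul_comm, ← Finset.mul_sum]
    simp only [smul_eq_C_mul, pow_zero, mul_one, Nat.factorial_zero, Nat.cast_one, div_one,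
      map_one]
    ring
  · simp [eval_finsetSum, Finset.sum_range_succ', mul_comm]

theorem exists_expTaylor_interpolant_and_inverse {c : ℂ} (hc : c ≠ 0) {S : Finset ℂ}
    (hS : Set.InjOn (fun t => exp (c * t)) S) {N : ℕ} (hN : 2 ≤ N) :
    ∃ g f : ℂ[X], (∀ t ∈ S, (X - C t) ^ N ∣ g - expTaylor c t N) ∧
      (∀ t ∈ S, (X - C t) ^ N ∣ f.comp g - X) ∧
      (∀ t ∈ S, (X - C (exp (c * t))) ^ N ∣ g.comp f - X) := by
  obtain ⟨g, hg⟩ :=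
    exists_forall_pow_dvd_sub (a := fun t => t) (Set.injOn_id _) N fun t => expTaylor c t N
  -- `g'(t) = c e^{ct} ≠ 0`: each `t ∈ S` is a simple root of `g - e^{ct}`.
  have hsimple : ∀ t ∈ S, ∃ u : ℂ[X], g - C (exp (c * t)) = (X - C t) * u ∧ u.eval t ≠ 0 := by
    intro t ht
    obtain ⟨d, hd⟩ := hg t ht
    obtain ⟨v, hv, hvt⟩ := expTaylor_sub_C_eq_mul hN c t
    obtain ⟨M, rfl⟩ := Nat.exists_eq_add_of_le' hN
    refine ⟨(X - C t) ^ (M + 1) * d + v, by linear_combination hd + hv, ?_⟩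
    simpa [hvt] using mul_ne_zero hc (exp_ne_zero (c * t))
  choose! u hu hut using hsimple
  have hinv : ∀ t ∈ S, ∃ q : ℂ[X], (X - C t) ^ N ∣ q.comp g - X := fun t ht =>
    exists_pow_dvd_comp_sub (hu t ht) (hut t ht) X N
  choose! q hq using hinv
  obtain ⟨f, hf⟩ := exists_forall_pow_dvd_sub hS N q
  have hfg : ∀ t ∈ S, (X - C t) ^ N ∣ f.comp g - X := by
    intro t ht
    have hsplit : f.comp g - X = (f - q t).comp g + ((q t).comp g - X) := by
      rw [sub_comp]; ring
    rw [hsplit]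
    refine dvd_add ?_ (hq t ht)
    calc (X - C t) ^ N ∣ (g - C (exp (c * t))) ^ N := by
          rw [hu t ht, mul_pow]; exact dvd_mul_right _ _
      _ ∣ (f - q t).comp g := by simpa using _root_.map_dvd (compRingHom g) (hf t ht)
  refine ⟨g, f, hg, hfg, fun t ht => pow_dvd_of_pow_dvd_comp (hu t ht) (hut t ht) N ?_⟩
  rw [sub_comp, comp_assoc, X_comp]
  exact (hfg t ht).trans (by simpa using sub_dvd_comp_sub_comp g (f.comp g) X)

end Polynomial

theorem spectrum.aeval_subset_image {𝕜 A : Type*} [Field 𝕜] [IsAlgClosed 𝕜] [Ring A]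
    [Algebra 𝕜 A] [FiniteDimensional 𝕜 A] (a : A) (p : 𝕜[X]) :
    spectrum 𝕜 (aeval a p) ⊆ (fun k => p.eval k) '' spectrum 𝕜 a := by
  nontriviality A
  exact (spectrum.map_polynomial_aeval_of_nonempty a p
    (spectrum.nonempty_of_isAlgClosed_of_finiteDimensional 𝕜 a)).subset

theorem SemiconjBy.aeval {R A : Type*} [CommSemiring R] [Semiring A] [Algebra R A] {a x y : A}
    (h : SemiconjBy a x y) (p : R[X]) : SemiconjBy a (aeval x p) (aeval y p) := by
  induction p using Polynomial.induction_on' with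
  | add p q hp hq => simpa using hp.add_right hq
  | monomial k r =>
    simpa only [aeval_monomial] using
      SemiconjBy.mul_right (Algebra.commute_algebraMap_right r a) (h.pow_right k)

namespace Matrix

variable {m : Type*} [Fintype m] [DecidableEq m]

section IsAlgClosed

variable {K : Type*} [Field K] [IsAlgClosed K]

theorem aeval_eq_zero_of_forall_pow_dvd (A : Matrix m m K) {N : ℕ} (hN : Fintype.card m ≤ N)
    {q : K[X]} (hq : ∀ t ∈ spectrum K A, (X - C t) ^ N ∣ q) : aeval A q = 0 := by
  classical
  rcases eq_or_ne q 0 with rfl | hq0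
  · exact map_zero _
  obtain ⟨r, rfl⟩ : A.charpoly ∣ q := by
    refine (IsAlgClosed.dvd_iff_roots_le_roots A.charpoly_monic.ne_zero hq0).mpr ?_
    refine Multiset.le_iff_count.mpr fun t => ?_
    by_cases ht : t ∈ spectrum K A
    · calc A.charpoly.roots.count t ≤ A.charpoly.natDegree :=
            (Multiset.count_le_card _ _).trans (card_roots' _)
        _ ≤ N := by rwa [charpoly_natDegree_eq_dim]
        _ ≤ q.rootMultiplicity t := (le_rootMultiplicity_iff hq0).mpr (hq t ht)
        _ = q.roots.count t := (count_roots q).symm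
    · have : t ∉ A.charpoly.roots := by
        rwa [mem_roots A.charpoly_monic.ne_zero, ← mem_spectrum_iff_isRoot_charpoly]
      simp [Multiset.count_eq_zero.mpr this]
  rw [map_mul, aeval_self_charpoly, zero_mul]

theorem aeval_eq_of_forall_pow_dvd_sub (A : Matrix m m K) {N : ℕ} (hN : Fintype.card m ≤ N)
    {p q : K[X]} (h : ∀ t ∈ spectrum K A, (X - C t) ^ N ∣ p - q) : aeval A p = aeval A q := by
  rw [← sub_eq_zero, ← map_sub]
  exact aeval_eq_zero_of_forall_pow_dvd A hN h

end IsAlgClosed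

section RCLike

variable {𝕂 : Type*} [RCLike 𝕂]

theorem exp_mul_eq_sum_of_pow_mul_eq_zero {B E : Matrix m m 𝕂} {N : ℕ} (h : B ^ N * E = 0) :
    NormedSpace.exp B * E = ∑ k ∈ Finset.range N, ((k ! : 𝕂)⁻¹ • B ^ k) * E := by
  have hsum : Summable fun k : ℕ => (k ! : 𝕂)⁻¹ • B ^ k :=
    open scoped Norms.Operator in NormedSpace.expSeries_summable' B
  rw [congr_fun (NormedSpace.exp_eq_tsum 𝕂) B, ← hsum.tsum_mul_right]
  refine tsum_eq_sum fun k hk => ?_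
  obtain ⟨j, rfl⟩ := Nat.exists_eq_add_of_le' (not_lt.mp (Finset.mem_range.not.mp hk))
  rw [pow_add, smul_mul_assoc, mul_assoc, h, mul_zero, smul_zero]

theorem exp_algebraMap (z : 𝕂) :
    NormedSpace.exp (algebraMap 𝕂 (Matrix m m 𝕂) z) = algebraMap 𝕂 _ (NormedSpace.exp z) := by
  open scoped Norms.Operator in exact (NormedSpace.algebraMap_exp_comm z).symm

end RCLike

theorem exp_smul_mul_aeval (R : Matrix m m ℂ) (c t : ℂ) (N : ℕ) {e : ℂ[X]}
    (he : aeval R ((X - C t) ^ N * e) = 0) :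
    NormedSpace.exp (c • R) * aeval R e = aeval R (expTaylor c t N * e) := by
  set B := c • aeval R (X - C t)
  have hsplit : c • R = algebraMap ℂ _ (c * t) + B := by
    simp [B, smul_sub, Algebra.algebraMap_eq_smul_one, smul_smul]
  have hB : ∀ k, B ^ k * aeval R e = c ^ k • aeval R ((X - C t) ^ k * e) := fun k => by
    simp only [B, _root_.smul_pow, smul_mul_assoc, map_mul, map_pow]
  rw [hsplit, exp_add_of_commute _ _ (Algebra.commute_algebraMap_left _ _), exp_algebraMap,
    mul_assoc, exp_mul_eq_sum_of_pow_mul_eq_zero (by rw [hB, he, smul_zero]),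
    ← Complex.exp_eq_exp_ℂ, ← Algebra.smul_def]
  simp only [expTaylor, smul_mul_assoc, Finset.sum_mul, map_smul, map_sum, hB, smul_smul]
  congr 1
  exact Finset.sum_congr rfl fun k _ => by rw [div_eq_inv_mul]

theorem exp_smul_eq_aeval (R : Matrix m m ℂ) (c : ℂ) {N : ℕ} (hN : Fintype.card m ≤ N)
    {g : ℂ[X]} (hg : ∀ t ∈ spectrum ℂ R, (X - C t) ^ N ∣ g - expTaylor c t N) :
    NormedSpace.exp (c • R) = aeval R g := by
  classical
  set S := (finite_spectrum R).toFinset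
  -- `aeval R (e t)` is the projection onto the generalized `t`-eigenspace of `R`.
  have hidem : ∀ t, ∃ e : ℂ[X], ∀ s ∈ S, (X - C s) ^ N ∣ e - if s = t then 1 else 0 :=
    fun t => exists_forall_pow_dvd_sub (a := fun s => s) (Set.injOn_id _) N _
  choose e he using hidem
  have he_ne : ∀ t, ∀ s ∈ S, s ≠ t → (X - C s) ^ N ∣ e t := fun t s hs hst => by
    simpa [hst] using he t s hs
  have hsum : ∑ t ∈ S, aeval R (e t) = 1 := by
    rw [← map_sum, ← map_one (aeval R : ℂ[X] →ₐ[ℂ] Matrix m m ℂ)]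
    refine aeval_eq_of_forall_pow_dvd_sub R hN fun s hs => ?_
    have hsS : s ∈ S := (finite_spectrum R).mem_toFinset.mpr hs
    have : ∑ t ∈ S, e t - 1 = ∑ t ∈ S, (e t - if s = t then 1 else 0) := by
      rw [Finset.sum_sub_distrib, Finset.sum_ite_eq, if_pos hsS]
    rw [this]
    exact Finset.dvd_sum fun t _ => he t s hsS
  have hloc : ∀ t ∈ S,
      NormedSpace.exp (c • R) * aeval R (e t) = aeval R g * aeval R (e t) := by
    intro t ht
    rw [exp_smul_mul_aeval R c t N, ← map_mul]
    · refine aeval_eq_of_forall_pow_dvd_sub R hN fun s hs => ?_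
      rw [← sub_mul]
      obtain rfl | hst := eq_or_ne s t
      · exact (dvd_sub_comm.mp (hg s hs)).mul_right _
      · exact (he_ne t s ((finite_spectrum R).mem_toFinset.mpr hs) hst).mul_left _
    · refine aeval_eq_zero_of_forall_pow_dvd R hN fun s hs => ?_
      obtain rfl | hst := eq_or_ne s t
      · exact dvd_mul_right _ _
      · exact (he_ne t s ((finite_spectrum R).mem_toFinset.mpr hs) hst).mul_left _
  calc NormedSpace.exp (c • R) = NormedSpace.exp (c • R) * ∑ t ∈ S, aeval R (e t) := by
        rw [hsum, mul_one]
    _ = aeval R g * ∑ t ∈ S, aeval R (e t) := by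
        simp only [Finset.mul_sum]
        exact Finset.sum_congr rfl hloc
    _ = aeval R g := by rw [hsum, mul_one]

theorem exists_polynomial_exp_and_log {c : ℂ} (hc : c ≠ 0) {S : Set ℂ} (hS : S.Finite)
    (hinj : S.InjOn fun t => exp (c * t)) (m : Type*) [Fintype m] [DecidableEq m] :
    ∃ g f : ℂ[X], (∀ t ∈ S, g.eval t = exp (c * t)) ∧ (∀ t ∈ S, f.eval (exp (c * t)) = t) ∧
      (∀ R : Matrix m m ℂ, spectrum ℂ R ⊆ S →
        NormedSpace.exp (c • R) = aeval R g ∧ aeval (aeval R g) f = R) ∧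
      ∀ G : Matrix m m ℂ, spectrum ℂ G ⊆ (fun t => exp (c * t)) '' S →
        aeval (aeval G f) g = G := by
  obtain ⟨g, f, hg, hfg, hgf⟩ := exists_expTaylor_interpolant_and_inverse hc
    (S := hS.toFinset) (by simpa using hinj) (N := Fintype.card m + 2) (by omega)
  simp only [Set.Finite.mem_toFinset] at hg hfg hgf
  have hgt : ∀ t ∈ S, g.eval t = exp (c * t) := fun t ht =>
    (eval_eq_of_pow_dvd_sub (by omega) (hg t ht)).trans (eval_expTaylor (by omega) c t)
  refine ⟨g, f, hgt, fun t ht => ?_, fun R hR => ⟨?_, ?_⟩, fun G hG => ?_⟩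
  · simpa [hgt t ht] using eval_eq_of_pow_dvd_sub (by omega) (hfg t ht)
  · exact exp_smul_eq_aeval R c (Nat.le_add_right _ _) fun t ht => hg t (hR ht)
  · rw [← aeval_comp]
    simpa using aeval_eq_of_forall_pow_dvd_sub R (Nat.le_add_right _ 2) fun t ht => hfg t (hR ht)
  · rw [← aeval_comp]
    refine (aeval_eq_of_forall_pow_dvd_sub G (Nat.le_add_right _ 2) fun μ hμ => ?_).trans
      (aeval_X G)
    obtain ⟨t, ht, rfl⟩ := hG hμ
    exact hgf t ht

end Matrix

theorem MatSimilar.refl {n : ℕ} (M : Matrix (Fin n) (Fin n) ℂ) : MatSimilar M M :=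
  ⟨1, isUnit_one, by simp⟩

theorem MatSimilar.aeval {n : ℕ} {M N : Matrix (Fin n) (Fin n) ℂ} (h : MatSimilar M N)
    (p : ℂ[X]) : MatSimilar (aeval M p) (aeval N p) := by
  obtain ⟨P, hP, rfl⟩ := h
  have hdet := (Matrix.isUnit_iff_isUnit_det P).mp hP
  have hconj : SemiconjBy P M (P * M * P⁻¹) := by
    rw [SemiconjBy, mul_assoc _ P⁻¹, Matrix.nonsing_inv_mul _ hdet, mul_one]
  refine ⟨P, hP, ?_⟩
  rw [(hconj.aeval p).eq, Matrix.mul_nonsing_inv_cancel_right _ _ hdet]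

theorem NonResonant.injOn_exp {T : Set ℂ} (hT : NonResonant T) :
    T.InjOn fun t => exp (2 * π * I * t) := by
  intro s hs t ht h
  obtain ⟨k, hk⟩ := exp_eq_exp_iff_exists_int.mp h
  refine hT s hs t ht ⟨k, mul_left_cancel₀ two_pi_I_ne_zero ?_⟩
  linear_combination hk

/-- For non-resonant `T` and `H = {e^{2πit} : t ∈ T}`, the map `R ↦ exp(2πi•R)` induces a
bijection from similarity classes of matrices with spectrum in `T` to similarity classes of
invertible matrices with spectrum in `H`: it lands in the right set, it is injective and
surjective on similarity classes. -/
theorem stmt_4 (T : Set ℂ) (hT : NonResonant T) (H : Set ℂ)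
    (hH : H = {h : ℂ | ∃ t ∈ T, h = Complex.exp (2 * π * I * t)}) (n : ℕ) :
    (∀ R : Matrix (Fin n) (Fin n) ℂ, spectrum ℂ R ⊆ T →
        IsUnit (NormedSpace.exp ((2 * π * I) • R)) ∧
          spectrum ℂ (NormedSpace.exp ((2 * π * I) • R)) ⊆ H) ∧
    (∀ R R' : Matrix (Fin n) (Fin n) ℂ, spectrum ℂ R ⊆ T → spectrum ℂ R' ⊆ T →
        (MatSimilar (NormedSpace.exp ((2 * π * I) • R))
            (NormedSpace.exp ((2 * π * I) • R')) ↔ MatSimilar R R')) ∧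
    (∀ G : Matrix (Fin n) (Fin n) ℂ, IsUnit G → spectrum ℂ G ⊆ H →
        ∃ R : Matrix (Fin n) (Fin n) ℂ, spectrum ℂ R ⊆ T ∧
          MatSimilar (NormedSpace.exp ((2 * π * I) • R)) G) := by
  have hinj := hT.injOn_exp
  replace hH : H = (fun t => exp (2 * π * I * t)) '' T := by
    rw [hH]; ext; simp [eq_comm]
  subst hH
  refine ⟨fun R hR => ⟨Matrix.isUnit_exp _, ?_⟩, fun R R' hR hR' => ?_, fun G _ hG => ?_⟩
  · obtain ⟨g, _, hg, -, hexp, -⟩ := Matrix.exists_polynomial_exp_and_log two_pi_I_ne_zero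
      (Matrix.finite_spectrum R) (hinj.mono hR) (Fin n)
    rw [(hexp R subset_rfl).1]
    rintro _ hμ
    obtain ⟨t, ht, rfl⟩ := spectrum.aeval_subset_image R g hμ
    exact ⟨t, hR ht, (hg t ht).symm⟩
  · obtain ⟨g, f, -, -, hexp, -⟩ := Matrix.exists_polynomial_exp_and_log two_pi_I_ne_zero
      ((Matrix.finite_spectrum R).union (Matrix.finite_spectrum R'))
      (hinj.mono (Set.union_subset hR hR')) (Fin n)
    obtain ⟨hE, hlog⟩ := hexp R Set.subset_union_left
    obtain ⟨hE', hlog'⟩ := hexp R' Set.subset_union_right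
    rw [hE, hE']
    exact ⟨fun h => hlog ▸ hlog' ▸ h.aeval f, fun h => h.aeval g⟩
  · obtain ⟨S, hST, hSG⟩ := Set.subset_image_iff.mp hG
    have hS : S.Finite :=
      Set.Finite.of_finite_image (hSG ▸ Matrix.finite_spectrum G) (hinj.mono hST)
    obtain ⟨g, f, -, hf, hexp, hlog⟩ :=
      Matrix.exists_polynomial_exp_and_log two_pi_I_ne_zero hS (hinj.mono hST) (Fin n)
    have hR : spectrum ℂ (aeval G f) ⊆ S := by
      refine (spectrum.aeval_subset_image G f).trans ?_
      rintro _ ⟨_, hμ, rfl⟩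
      obtain ⟨t, ht, rfl⟩ := hSG ▸ hμ
      simpa [hf t ht] using ht
    refine ⟨aeval G f, hR.trans hST, ?_⟩
    rw [(hexp _ hR).1, hlog G hSG.ge]
    exact MatSimilar.refl G
end

section
/- Let V₁,…,V_m be finite-dimensional ℂ-vector spaces and a_i : V_{i−1} → V_i (indices mod m, so a_1 : V_m → V_1) linear maps such that the composite a_m⋯a_1 : V_m → V_m is nilpotent. Define a_1' = Σ_{n≥1} ((2πi)^n/n!)·a_1(a_m⋯a_1)^{n−1} and a_1'' = (1/(2πi))·Σ_{n≥1} ((−1)^{n−1}/n)·a_1(a_m⋯a_1)^{n−1} (both sums finite by nilpotency). Then applying the construction a_1 ↦ a_1' followed by a_1 ↦ a_1'' (with a_i unchanged for i ≠ 1) recovers the original map a_1, and vice versa. -/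
open scoped Real Nat
open Complex

/-- The 'exponential' construction on the arrow `a₁` of a representation of the cyclic
quiver `Q_m`: `a₁' = ∑_{n≥1} ((2πi)^n/n!) • a₁ (a_m⋯a₁)^{n-1}`, where `b = a_m⋯a₂` is the
composite of the remaining arrows around the cycle, so `a_m⋯a₁ = b * a₁`. -/
noncomputable def cqExp {d1 dm : ℕ} (b : Matrix (Fin dm) (Fin d1) ℂ)
    (a1 : Matrix (Fin d1) (Fin dm) ℂ) : Matrix (Fin d1) (Fin dm) ℂ :=
  ∑' k : ℕ, (((2 * π * I) ^ (k + 1) / ((k + 1)! : ℂ)) • (a1 * (b * a1) ^ k))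

/-- The 'logarithm' construction:
`a₁'' = (1/(2πi)) • ∑_{n≥1} ((-1)^{n-1}/n) • a₁ (a_m⋯a₁)^{n-1}`. -/
noncomputable def cqLog {d1 dm : ℕ} (b : Matrix (Fin dm) (Fin d1) ℂ)
    (a1 : Matrix (Fin d1) (Fin dm) ℂ) : Matrix (Fin d1) (Fin dm) ℂ :=
  (1 / (2 * π * I)) • ∑' k : ℕ, (((-1) ^ k / ((k + 1 : ℕ) : ℂ)) • (a1 * (b * a1) ^ k))

/-!
Twisting `a ↦ a f(b a)` by a power series `f` changes the cycle by `b (a f(b a)) = (X f)(b a)`,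
so twisting by `f` and then by `g` is twisting by `f · g(X f)`, which is `1` as soon as
`(X g) ∘ (X f) = X`. After rescaling `a₁` by `2πi`, the exponential construction has
`X f = e^X - 1` and the logarithm has `X g = log (1 + X)`, and these are compositional inverses:
`log (1 + (e^X - 1))` has no constant term and derivative `e^X / e^X = 1`. Since `b a` is
nilpotent, power series are evaluated at it through a truncation, compatibly with products and
substitution.
-/

namespace PowerSeries

variable {R S : Type*} [CommRing R] [Ring S] [Algebra R S] {x : S} {N : ℕ}

theorem aeval_trunc_eq_of_coeff_eq (hx : x ^ N = 0) {f : R⟦X⟧} {p : Polynomial R}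
    (h : ∀ d < N, p.coeff d = coeff d f) :
    Polynomial.aeval x (trunc N f) = Polynomial.aeval x p := by
  obtain ⟨q, hq⟩ : Polynomial.X ^ N ∣ trunc N f - p :=
    Polynomial.X_pow_dvd_iff.2 fun d hd => by simp [coeff_trunc, hd, h d hd]
  rw [← sub_eq_zero, ← map_sub, hq, map_mul, Polynomial.aeval_X_pow, hx, zero_mul]

variable (x N) in
noncomputable def evalOfPowEqZero (hx : x ^ N = 0) : R⟦X⟧ →ₐ[R] S where
  toFun f := Polynomial.aeval x (trunc N f)
  map_one' := by
    rw [aeval_trunc_eq_of_coeff_eq hx (p := 1) fun d _ => by simp [Polynomial.coeff_one, coeff_one]]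
    exact map_one _
  map_mul' f g := by
    rw [← map_mul, aeval_trunc_eq_of_coeff_eq hx fun d hd => ?_]
    rw [coeff_mul_eq_coeff_trunc_mul_trunc f g hd, ← Polynomial.coeff_coe, Polynomial.coe_mul]
  map_zero' := by simp
  map_add' f g := by simp
  commutes' r := by
    rw [aeval_trunc_eq_of_coeff_eq hx (p := Polynomial.C r) fun d _ => by
      simp [Polynomial.coeff_C, coeff_C]]
    exact Polynomial.aeval_C x r

theorem evalOfPowEqZero_apply (hx : x ^ N = 0) (f : R⟦X⟧) :
    evalOfPowEqZero x N hx f = Polynomial.aeval x (trunc N f) := rfl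

@[simp]
theorem evalOfPowEqZero_X (hx : x ^ N = 0) : evalOfPowEqZero x N hx (X : R⟦X⟧) = x := by
  rw [evalOfPowEqZero_apply, aeval_trunc_eq_of_coeff_eq hx (p := Polynomial.X) fun d _ => by
    simp [Polynomial.coeff_X, coeff_X, eq_comm], Polynomial.aeval_X]

theorem evalOfPowEqZero_pow_eq_zero (hx : x ^ N = 0) {u : R⟦X⟧} (hu : constantCoeff u = 0) :
    evalOfPowEqZero x N hx u ^ N = 0 := by
  obtain ⟨u', rfl⟩ := X_dvd_iff.2 hu
  rw [← map_pow, mul_pow, map_mul, map_pow, evalOfPowEqZero_X, hx, zero_mul]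

theorem evalOfPowEqZero_subst (hx : x ^ N = 0) {u g : R⟦X⟧} (hu : constantCoeff u = 0) :
    evalOfPowEqZero x N hx (g.subst u) =
      evalOfPowEqZero (evalOfPowEqZero x N hx u) N (evalOfPowEqZero_pow_eq_zero hx hu) g := by
  have hsubst := HasSubst.of_constantCoeff_zero' hu
  conv_lhs => rw [eq_X_pow_mul_shift_add_trunc N g]
  rw [subst_add hsubst, subst_mul hsubst, subst_pow hsubst, subst_X hsubst, subst_coe hsubst,
    map_add, map_mul, map_pow, evalOfPowEqZero_pow_eq_zero hx hu, zero_mul, zero_add,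
    ← Polynomial.aeval_algHom_apply]
  rfl

noncomputable def divX (f : R⟦X⟧) : R⟦X⟧ := mk fun n => coeff (n + 1) f

@[simp]
theorem coeff_divX (f : R⟦X⟧) (n : ℕ) : coeff n (divX f) = coeff (n + 1) f := coeff_mk _ _

theorem X_mul_divX_add (f : R⟦X⟧) : X * divX f + C (constantCoeff f) = f :=
  (eq_X_mul_shift_add_const f).symm

theorem subst_eq_X_of_subst_eq_X {P Q : R⟦X⟧} (hP : constantCoeff P = 0)
    (hP' : IsUnit (coeff 1 P)) (h : Q.subst P = X) : P.subst Q = X := by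
  have hinv := HasSubst.substInvOfIsUnit P hP'
  -- `Q = Q ∘ (P ∘ P⁻¹) = (Q ∘ P) ∘ P⁻¹ = P⁻¹`
  have hQ : Q = P.substInvOfIsUnit hP' := by
    rw [← X_subst Q, ← subst_substInvOfIsUnit_right P hP hP',
      ← subst_comp_subst_apply (HasSubst.of_constantCoeff_zero' hP) hinv, h, subst_X hinv]
  rw [hQ, subst_substInvOfIsUnit_right P hP hP']

section ExpLog

variable {A : Type*} [CommRing A] [Algebra ℚ A]

theorem one_add_X_mul_derivative_log : (1 + X) * d⁄dX A (log A) = 1 := by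
  ext n
  rw [deriv_log, add_mul, one_mul, map_add]
  rcases n with _ | n
  · simp
  · simp [coeff_one, pow_succ]

theorem log_subst_exp_sub_one [IsAddTorsionFree A] : (log A).subst (exp A - 1) = X := by
  have hsubst : HasSubst (exp A - 1) := HasSubst.exp_sub_one
  refine derivative.ext ?_ ?_
  · have hexp_mul := congrArg (substAlgHom hsubst) (one_add_X_mul_derivative_log (A := A))
    rw [map_mul, map_add, map_one, substAlgHom_X, add_sub_cancel, coe_substAlgHom] at hexp_mul
    rw [derivative_subst hsubst, map_sub, derivative_one, sub_zero, derivative_exp, derivative_X,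
      mul_comm, hexp_mul]
  · rw [← logOf_eq, constantCoeff_logOf constantCoeff_exp, constantCoeff_X]

theorem X_mul_divX_exp : X * divX (exp A) = exp A - 1 := by
  simpa [constantCoeff_exp, eq_sub_iff_add_eq] using X_mul_divX_add (exp A)

theorem X_mul_divX_log : X * divX (log A) = log A := by
  simpa using X_mul_divX_add (log A)

theorem exp_sub_one_subst_log [IsAddTorsionFree A] : (exp A - 1).subst (log A) = X :=
  subst_eq_X_of_subst_eq_X (by simp [constantCoeff_exp]) (by simp [coeff_exp])
    log_subst_exp_sub_one

end ExpLog

end PowerSeries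

namespace Matrix

open PowerSeries

variable {R : Type*} [CommRing R] [TopologicalSpace R] {m n : Type*} [Fintype m] [Fintype n]
  [DecidableEq n]

/-- The operation `a₁ ↦ a₁ f(a_m ⋯ a₁)` on the cyclic quiver, for `a = a₁`, `b = a_m ⋯ a₂`. -/
noncomputable def cycleTwist (b : Matrix n m R) (f : R⟦X⟧) (a : Matrix m n R) : Matrix m n R :=
  ∑' k, coeff k f • (a * (b * a) ^ k)

variable {b : Matrix n m R} {a : Matrix m n R} {N : ℕ}

theorem cycleTwist_eq_mul_eval (hN : (b * a) ^ N = 0) (f : R⟦X⟧) :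
    cycleTwist b f a = a * evalOfPowEqZero (b * a) N hN f := by
  rw [cycleTwist, tsum_eq_sum (s := Finset.range N) fun k hk => by
      rw [pow_eq_zero_of_le (not_lt.1 (Finset.mem_range.not.1 hk)) hN, Matrix.mul_zero,
        smul_zero],
    evalOfPowEqZero_apply, Polynomial.aeval_def, eval₂_trunc_eq_sum_range, Matrix.mul_sum]
  simp only [← Algebra.smul_def, Matrix.mul_smul]

theorem mul_cycleTwist (hN : (b * a) ^ N = 0) (f : R⟦X⟧) :
    b * cycleTwist b f a = evalOfPowEqZero (b * a) N hN (X * f) := by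
  rw [cycleTwist_eq_mul_eval hN, ← Matrix.mul_assoc, map_mul, evalOfPowEqZero_X]

theorem cycleTwist_cycleTwist (hN : (b * a) ^ N = 0) (f g : R⟦X⟧) :
    cycleTwist b g (cycleTwist b f a) =
      a * evalOfPowEqZero (b * a) N hN (f * g.subst (X * f)) := by
  have hXf : constantCoeff (X * f) = 0 := by simp
  have hN' : (b * cycleTwist b f a) ^ N = 0 := by
    rw [mul_cycleTwist hN]
    exact evalOfPowEqZero_pow_eq_zero hN hXf
  rw [cycleTwist_eq_mul_eval hN', evalOfPowEqZero_apply, mul_cycleTwist hN,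
    ← evalOfPowEqZero_apply (evalOfPowEqZero_pow_eq_zero hN hXf),
    ← evalOfPowEqZero_subst hN hXf, cycleTwist_eq_mul_eval hN, Matrix.mul_assoc, ← map_mul]

theorem cycleTwist_cycleTwist_of_subst_eq_X (hba : IsNilpotent (b * a)) {f g : R⟦X⟧}
    (h : (X * g).subst (X * f) = X) : cycleTwist b g (cycleTwist b f a) = a := by
  obtain ⟨N, hN⟩ := hba
  have hsubst : HasSubst (X * f) := HasSubst.of_constantCoeff_zero' (by simp)
  have hinv : f * g.subst (X * f) = 1 := X_mul_cancel <| calc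
    X * (f * g.subst (X * f)) = (X * g).subst (X * f) := by
      rw [subst_mul hsubst, subst_X hsubst, mul_assoc]
    _ = X * 1 := by rw [h, mul_one]
  rw [cycleTwist_cycleTwist hN, hinv, map_one, Matrix.mul_one]

end Matrix

open PowerSeries Matrix

theorem cqExp_eq_cycleTwist {d1 dm : ℕ} (b : Matrix (Fin dm) (Fin d1) ℂ)
    (a1 : Matrix (Fin d1) (Fin dm) ℂ) :
    cqExp b a1 = cycleTwist b (divX (PowerSeries.exp ℂ)) ((2 * π * I) • a1) := by
  refine tsum_congr fun k => ?_
  rw [coeff_divX, coeff_exp, Matrix.mul_smul, smul_pow, Matrix.smul_mul, Matrix.mul_smul,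
    smul_smul, smul_smul]
  congr 1
  simp only [map_div₀, map_one, map_natCast]
  ring

theorem cqLog_eq_cycleTwist {d1 dm : ℕ} (b : Matrix (Fin dm) (Fin d1) ℂ)
    (a1 : Matrix (Fin d1) (Fin dm) ℂ) :
    cqLog b a1 = (2 * π * I)⁻¹ • cycleTwist b (divX (PowerSeries.log ℂ)) a1 := by
  rw [cqLog, one_div]
  congr 1
  refine tsum_congr fun k => ?_
  rw [coeff_divX, coeff_log]
  simp [pow_succ]

/-- For a representation of the cyclic quiver `Q_m` (arrows `a₁ : V_m → V_1` and
`b = a_m⋯a₂ : V_1 → V_m` the composite of the other arrows, which are left unchanged)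
with nilpotent cycle `a_m⋯a₁ = b a₁`, the exponential and logarithm constructions on
`a₁` are mutually inverse. -/
theorem stmt_5 (d1 dm : ℕ) (a1 : Matrix (Fin d1) (Fin dm) ℂ)
    (b : Matrix (Fin dm) (Fin d1) ℂ) (hnil : IsNilpotent (b * a1)) :
    cqLog b (cqExp b a1) = a1 ∧ cqExp b (cqLog b a1) = a1 := by
  have hc : (2 * π * I : ℂ) ≠ 0 := by simp [Real.pi_ne_zero]
  have hlog_exp :
      (X * divX (PowerSeries.log ℂ)).subst (X * divX (PowerSeries.exp ℂ)) = X := by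
    rw [X_mul_divX_log, X_mul_divX_exp, log_subst_exp_sub_one]
  have hexp_log :
      (X * divX (PowerSeries.exp ℂ)).subst (X * divX (PowerSeries.log ℂ)) = X := by
    rw [X_mul_divX_log, X_mul_divX_exp, exp_sub_one_subst_log]
  constructor
  · rw [cqExp_eq_cycleTwist, cqLog_eq_cycleTwist,
      cycleTwist_cycleTwist_of_subst_eq_X (by rw [Matrix.mul_smul]; exact hnil.smul _) hlog_exp,
      inv_smul_smul₀ hc]
  · rw [cqLog_eq_cycleTwist, cqExp_eq_cycleTwist, smul_inv_smul₀ hc,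
      cycleTwist_cycleTwist_of_subst_eq_X hnil hexp_log]
end

section
/- Let u₁, v₁ ∈ GL(V) with V finite-dimensional over ℂ, and suppose e = u₁ is invertible and e* = v₁ − u₁^{-1}. Then the surface-relation factor u₁v₁u₁^{-1}v₁^{-1} equals (1 + e e*)(1 + e* e)^{-1}, where 1 + e e* = u₁v₁ and 1 + e* e = v₁u₁ are both invertible; consequently, for g pairs (u_j, v_j) and invertible elements ℓ₁,…,ℓ_k with ∏_j [u_j, v_j] · ∏_m ℓ_m = 1, the element q·1 = ∏_j (1 + e_j e_j*)(1 + e_j* e_j)^{-1} · ∏ (monodromy factors) whenever each ℓ_m is expressed as σ_m^{∓1}(1 + x_m y_m)^{±1} with all factors invertible. -/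
/-- Rewriting the surface group relation into the multiplicative preprojective relation.
For invertible endomorphisms `u, v` of a finite-dimensional complex vector space, with
`e = u`, `e* = v - u⁻¹`, one has `1 + e e* = u v`, `1 + e* e = v u`, both invertible, and
`u v u⁻¹ v⁻¹ = (1 + e e*)(1 + e* e)⁻¹`. Consequently, for `g` pairs `(u_j, v_j)` and
invertible `ℓ₁, …, ℓ_k` with `∏_j [u_j,v_j] · ∏_m ℓ_m = 1`, one gets
`∏_j (1 + e_j e_j*)(1 + e_j* e_j)⁻¹ = (∏_m ℓ_m)⁻¹`. -/
theorem stmt_18 (V : Type*) [AddCommGroup V] [Module ℂ V] [FiniteDimensional ℂ V]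
    (g k : ℕ) (u v : Fin g → (Module.End ℂ V)ˣ) (ℓ : Fin k → (Module.End ℂ V)ˣ)
    (e es : Fin g → Module.End ℂ V)
    (he : ∀ j, e j = (u j : Module.End ℂ V))
    (hes : ∀ j, es j = (v j : Module.End ℂ V) - ↑(u j)⁻¹)
    (hrel : (List.ofFn fun j =>
        (u j : Module.End ℂ V) * ↑(v j) * ↑(u j)⁻¹ * ↑(v j)⁻¹).prod *
      (List.ofFn fun i => (ℓ i : Module.End ℂ V)).prod = 1) :
    (∀ j, 1 + e j * es j = (u j : Module.End ℂ V) * ↑(v j) ∧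
          1 + es j * e j = (v j : Module.End ℂ V) * ↑(u j) ∧
          IsUnit (1 + e j * es j) ∧ IsUnit (1 + es j * e j) ∧
          (u j : Module.End ℂ V) * ↑(v j) * ↑(u j)⁻¹ * ↑(v j)⁻¹
            = (1 + e j * es j) * Ring.inverse (1 + es j * e j)) ∧
    (List.ofFn fun j => (1 + e j * es j) * Ring.inverse (1 + es j * e j)).prod
      = Ring.inverse (List.ofFn fun i => (ℓ i : Module.End ℂ V)).prod := by
  have h1 : ∀ j, 1 + e j * es j = (u j : Module.End ℂ V) * ↑(v j) := by
    intro j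
    rw [he, hes, mul_sub]
    have : (u j : Module.End ℂ V) * ↑(u j)⁻¹ = 1 := by
      rw [← Units.val_mul, mul_inv_cancel, Units.val_one]
    rw [this, add_sub_cancel]
  have h2 : ∀ j, 1 + es j * e j = (v j : Module.End ℂ V) * ↑(u j) := by
    intro j
    rw [he, hes, sub_mul]
    have : (↑(u j)⁻¹ : Module.End ℂ V) * ↑(u j) = 1 := by
      rw [← Units.val_mul, inv_mul_cancel, Units.val_one]
    rw [this, add_sub_cancel]
  have hu1 : ∀ j, IsUnit (1 + e j * es j) := fun j => by
    rw [h1]; exact ((u j).isUnit.mul (v j).isUnit)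
  have hu2 : ∀ j, IsUnit (1 + es j * e j) := fun j => by
    rw [h2]; exact ((v j).isUnit.mul (u j).isUnit)
  have hcomm : ∀ j, (u j : Module.End ℂ V) * ↑(v j) * ↑(u j)⁻¹ * ↑(v j)⁻¹
      = (1 + e j * es j) * Ring.inverse (1 + es j * e j) := by
    intro j
    rw [h1, h2]
    have : Ring.inverse ((v j : Module.End ℂ V) * ↑(u j)) = ↑((v j * u j)⁻¹) := by
      rw [← Units.val_mul, Ring.inverse_unit]
    rw [this, mul_inv_rev, Units.val_mul, ← mul_assoc]
  refine ⟨fun j => ⟨h1 j, h2 j, hu1 j, hu2 j, hcomm j⟩, ?_⟩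
  have heq : (List.ofFn fun j => (1 + e j * es j) * Ring.inverse (1 + es j * e j))
      = (List.ofFn fun j => (u j : Module.End ℂ V) * ↑(v j) * ↑(u j)⁻¹ * ↑(v j)⁻¹) := by
    congr 1; funext j; exact (hcomm j).symm
  rw [heq]
  have hP : (List.ofFn fun i => (ℓ i : Module.End ℂ V)).prod
      = ↑((List.ofFn ℓ).prod) := by
    have := map_list_prod (Units.coeHom (Module.End ℂ V)) (List.ofFn ℓ)
    rw [List.map_ofFn] at this
    exact this.symm
  rw [hP, Ring.inverse_unit]
  set P := (List.ofFn ℓ).prod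
  rw [hP] at hrel
  calc (List.ofFn fun j => (u j : Module.End ℂ V) * ↑(v j) * ↑(u j)⁻¹ * ↑(v j)⁻¹).prod
      = (List.ofFn fun j => (u j : Module.End ℂ V) * ↑(v j) * ↑(u j)⁻¹ * ↑(v j)⁻¹).prod
        * (↑P * ↑P⁻¹) := by rw [← Units.val_mul, mul_inv_cancel, Units.val_one, mul_one]
    _ = ((List.ofFn fun j => (u j : Module.End ℂ V) * ↑(v j) * ↑(u j)⁻¹ * ↑(v j)⁻¹).prod
        * ↑P) * ↑P⁻¹ := by rw [mul_assoc]
    _ = ↑P⁻¹ := by rw [hrel, one_mul]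
end
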